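/- For a ≥ b ≥ c > 0, the demagnetizing integral satisfies abc·∫₀^∞ du / ( (a²+u)·√((a²+u)(b²+u)(c²+u)) ) = (bc/a²)·(Γ(3/2)Γ(1)/Γ(5/2))·F₁(3/2; 1/2, 1/2; 5/2; 1−b²/a², 1−c²/a²) = (2bc/(3a²))·F₁(3/2; 1/2, 1/2; 5/2; 1−b²/a², 1−c²/a²). -/

import Mathlib

open MeasureTheory Real

/-- Pochhammer symbol `(a)_n = a(a+1)⋯(a+n-1)`. -/
noncomputable def poch (a : ℝ) (n : ℕ) : ℝ := ∏ i ∈ Finset.range n, (a + i)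

/-- Appell's first hypergeometric function `F₁(α;β,β';γ;x,y)`. -/
noncomputable def appellF1 (α β β' γ x y : ℝ) : ℝ :=
  ∑' p : ℕ × ℕ, poch α (p.1 + p.2) * poch β p.1 * poch β' p.2 /
    (poch γ (p.1 + p.2) * p.1.factorial * p.2.factorial) * x ^ p.1 * y ^ p.2

/-!
Substituting `u = a²/t - a²` turns the integral into
`a⁻³ ∫₀¹ t^(1/2) (1 - x t)^(-1/2) (1 - y t)^(-1/2) dt` with `x = 1 - b²/a²`, `y = 1 - c²/a²`.
Expanding both factors in binomial series (nonnegative terms, so the double series can be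
integrated termwise) and using `∫₀¹ t^(α-1+m+n) dt = 1/(α+m+n) = (α)_(m+n) / (α (α+1)_(m+n))`
gives the Euler representation `F₁(α;β,β';α+1;x,y) = α ∫₀¹ t^(α-1) (1-xt)^(-β) (1-yt)^(-β') dt`,
here with `α = 3/2`, `β = β' = 1/2`. Finally `Γ(3/2) Γ(1) / Γ(5/2) = 2/3`.
-/

open Set

lemma poch_eq_ascPochhammer_eval (a : ℝ) (n : ℕ) : poch a n = (ascPochhammer ℝ n).eval a := by
  induction n with
  | zero => simp [poch]
  | succ n ih => simp [poch, Finset.prod_range_succ, ascPochhammer_succ_right, ← ih]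

lemma ring_choose_eq_poch_div_factorial (a : ℝ) (n : ℕ) :
    Ring.choose (a + n - 1) n = poch a n / n.factorial := by
  rw [Ring.choose_eq_smul, Polynomial.descPochhammer_smeval_eq_ascPochhammer,
    Polynomial.ascPochhammer_smeval_eq_eval, poch_eq_ascPochhammer_eval, smul_eq_mul,
    inv_mul_eq_div]
  ring_nf

lemma hasSum_poch_div_factorial_mul_pow (a : ℝ) {x : ℝ} (hx : |x| < 1) :
    HasSum (fun n => poch a n / n.factorial * x ^ n) ((1 - x) ^ (-a)) := by
  have h := (Real.one_div_one_sub_rpow_hasFPowerSeriesOnBall_zero a).hasSum (y := x)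
    (by simpa [enorm_eq_nnnorm, ← NNReal.coe_lt_coe] using hx)
  simp only [FormalMultilinearSeries.ofScalars_apply_eq, smul_eq_mul, zero_add, one_div] at h
  rw [Real.rpow_neg (by linarith [le_abs_self x])]
  simpa only [ring_choose_eq_poch_div_factorial, mul_comm] using h

lemma poch_succ_right (a : ℝ) (n : ℕ) : poch a (n + 1) = poch a n * (a + n) :=
  Finset.prod_range_succ _ _

lemma poch_succ_left (a : ℝ) (n : ℕ) : poch a (n + 1) = a * poch (a + 1) n := by
  rw [poch, Finset.prod_range_succ', mul_comm]
  simp only [poch, Nat.cast_add, Nat.cast_one, Nat.cast_zero, add_zero]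
  congr 1
  exact Finset.prod_congr rfl fun i _ => by ring

lemma poch_nonneg {a : ℝ} (ha : 0 ≤ a) (n : ℕ) : 0 ≤ poch a n :=
  Finset.prod_nonneg fun _ _ => by positivity

lemma poch_div_poch_add_one {a : ℝ} (ha : 0 < a) (n : ℕ) :
    poch a n / poch (a + 1) n = a / (a + n) := by
  have hpos : 0 < poch (a + 1) n := Finset.prod_pos fun _ _ => by positivity
  rw [div_eq_div_iff hpos.ne' (by positivity), ← poch_succ_right, poch_succ_left]

lemma integral_Ioo_zero_one_rpow {s : ℝ} (hs : -1 < s) :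
    ∫ t in Ioo (0 : ℝ) 1, t ^ s = 1 / (s + 1) := by
  rw [← integral_Ioc_eq_integral_Ioo, ← intervalIntegral.integral_of_le zero_le_one,
    integral_rpow (Or.inl hs), Real.one_rpow, Real.zero_rpow (by linarith), sub_zero]

section EulerIntegral

variable {α β β' x y : ℝ}

lemma hasSum_one_sub_rpow_mul_one_sub_rpow (hβ : 0 ≤ β) (hβ' : 0 ≤ β') (hx0 : 0 ≤ x)
    (hx1 : x < 1) (hy0 : 0 ≤ y) (hy1 : y < 1) {t : ℝ} (ht0 : 0 ≤ t) (ht1 : t ≤ 1) :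
    HasSum (fun p : ℕ × ℕ => poch β p.1 / p.1.factorial * x ^ p.1 *
        (poch β' p.2 / p.2.factorial * y ^ p.2) * t ^ (p.1 + p.2))
      ((1 - x * t) ^ (-β) * (1 - y * t) ^ (-β')) := by
  have hxt : |x * t| < 1 := by rw [abs_of_nonneg (by positivity)]; nlinarith
  have hyt : |y * t| < 1 := by rw [abs_of_nonneg (by positivity)]; nlinarith
  have hf := hasSum_poch_div_factorial_mul_pow β hxt
  have hg := hasSum_poch_div_factorial_mul_pow β' hyt
  have hfg := hf.mul hg <| hf.summable.mul_of_nonneg hg.summable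
    (fun n => by have := poch_nonneg hβ n; positivity)
    (fun n => by have := poch_nonneg hβ' n; positivity)
  refine hfg.congr_fun fun p => ?_
  simp only [mul_pow, pow_add]
  ring

lemma appellF1_add_one_div_eq_tsum (hα : 0 < α) :
    appellF1 α β β' (α + 1) x y / α = ∑' p : ℕ × ℕ, poch β p.1 / p.1.factorial * x ^ p.1 *
        (poch β' p.2 / p.2.factorial * y ^ p.2) / (α + (p.1 + p.2 : ℕ)) := by
  rw [appellF1, ← tsum_div_const]
  refine tsum_congr fun p => ?_
  have hpoch := poch_div_poch_add_one hα (p.1 + p.2)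
  have hpos : 0 < poch (α + 1) (p.1 + p.2) := Finset.prod_pos fun _ _ => by positivity
  rw [div_eq_iff hpos.ne'] at hpoch
  rw [hpoch]
  field_simp

theorem integral_rpow_mul_one_sub_rpow_mul_one_sub_rpow (hα : 0 < α) (hβ : 0 ≤ β)
    (hβ' : 0 ≤ β') (hx0 : 0 ≤ x) (hx1 : x < 1) (hy0 : 0 ≤ y) (hy1 : y < 1) :
    ∫ t in Ioo (0 : ℝ) 1, t ^ (α - 1) * (1 - x * t) ^ (-β) * (1 - y * t) ^ (-β')
      = appellF1 α β β' (α + 1) x y / α := by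
  set d : ℕ × ℕ → ℝ := fun p => poch β p.1 / p.1.factorial * x ^ p.1 *
    (poch β' p.2 / p.2.factorial * y ^ p.2)
  have hd : ∀ p, 0 ≤ d p := fun p => by
    have := poch_nonneg hβ p.1; have := poch_nonneg hβ' p.2; positivity
  set F : ℕ × ℕ → ℝ → ℝ := fun p t => d p * t ^ (α - 1 + (p.1 + p.2 : ℕ))
  have hexp : ∀ p : ℕ × ℕ, -1 < α - 1 + (p.1 + p.2 : ℕ) := fun p => by
    have : (0 : ℝ) ≤ (p.1 + p.2 : ℕ) := Nat.cast_nonneg _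
    linarith
  have hF_integral : ∀ p, ∫ t in Ioo (0 : ℝ) 1, F p t = d p / (α + (p.1 + p.2 : ℕ)) := by
    intro p
    rw [integral_const_mul, integral_Ioo_zero_one_rpow (hexp p)]
    ring_nf
  have hF_int : ∀ p, IntegrableOn (F p) (Ioo 0 1) := fun p =>
    ((intervalIntegral.integrableOn_Ioo_rpow_iff one_pos).2 (hexp p)).const_mul (d p)
  have hF_sum : Summable fun p => ∫ t in Ioo (0 : ℝ) 1, ‖F p t‖ := by
    have hnorm : ∀ p, ∫ t in Ioo (0 : ℝ) 1, ‖F p t‖ = d p / (α + (p.1 + p.2 : ℕ)) := by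
      intro p
      rw [← hF_integral]
      refine setIntegral_congr_fun measurableSet_Ioo fun t ht => ?_
      exact Real.norm_of_nonneg (mul_nonneg (hd p) (Real.rpow_nonneg ht.1.le _))
    simp only [hnorm]
    have hd_sum : Summable d := by
      simpa using (hasSum_one_sub_rpow_mul_one_sub_rpow hβ hβ' hx0 hx1 hy0 hy1 zero_le_one
        le_rfl).summable
    refine hd_sum.div_const α
      |>.of_nonneg_of_le (fun p => by have := hd p; positivity) fun p => ?_
    exact div_le_div_of_nonneg_left (hd p) hα (le_add_of_nonneg_right (Nat.cast_nonneg _))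
  have hpointwise : ∀ t ∈ Ioo (0 : ℝ) 1,
      t ^ (α - 1) * (1 - x * t) ^ (-β) * (1 - y * t) ^ (-β') = ∑' p, F p t := by
    intro t ht
    rw [mul_assoc, ← ((hasSum_one_sub_rpow_mul_one_sub_rpow hβ hβ' hx0 hx1 hy0 hy1 ht.1.le
      ht.2.le).mul_left (t ^ (α - 1))).tsum_eq]
    refine tsum_congr fun p => ?_
    simp only [F, Real.rpow_add ht.1, Real.rpow_natCast]
    ring
  rw [setIntegral_congr_fun measurableSet_Ioo hpointwise,
    ← integral_tsum_of_summable_integral_norm hF_int hF_sum, appellF1_add_one_div_eq_tsum hα]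
  exact tsum_congr hF_integral

end EulerIntegral

lemma image_div_sub_Ioo_zero_one {c : ℝ} (hc : 0 < c) :
    (fun t => c / t - c) '' Ioo 0 1 = Ioi 0 := by
  ext u
  constructor
  · rintro ⟨t, ⟨ht0, ht1⟩, rfl⟩
    simpa [sub_pos] using (lt_div_iff₀ ht0).2 (by nlinarith)
  · intro hu
    have hu : 0 < u := hu
    refine ⟨c / (c + u), ⟨by positivity, (div_lt_one (by positivity)).2 (by linarith)⟩, ?_⟩
    field_simp
    ring

lemma integral_Ioi_eq_integral_Ioo_comp_div_sub {c : ℝ} (hc : 0 < c) (G : ℝ → ℝ) :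
    ∫ u in Ioi 0, G u = ∫ t in Ioo 0 1, c / t ^ 2 * G (c / t - c) := by
  have hderiv : ∀ t ∈ Ioo (0 : ℝ) 1,
      HasDerivWithinAt (fun t => c / t - c) (-c / t ^ 2) (Ioo 0 1) t := fun t ht =>
    (((hasDerivAt_inv ht.1.ne').const_mul c).sub_const c).hasDerivWithinAt.congr_deriv
      (by field_simp)
  have hinj : InjOn (fun t => c / t - c) (Ioo 0 1) := fun t₁ ht₁ t₂ ht₂ h => by
    simpa [div_eq_div_iff ht₁.1.ne' ht₂.1.ne', hc.ne', eq_comm] using h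
  rw [← image_div_sub_Ioo_zero_one hc,
    integral_image_eq_integral_abs_deriv_smul measurableSet_Ioo hderiv hinj]
  refine setIntegral_congr_fun measurableSet_Ioo fun t ht => ?_
  rw [smul_eq_mul, abs_div, abs_neg, abs_of_pos hc, abs_of_pos (pow_pos ht.1 2)]

lemma sq_add_div_sub_sq {a : ℝ} (ha : a ≠ 0) (b : ℝ) {t : ℝ} (ht : t ≠ 0) :
    b ^ 2 + (a ^ 2 / t - a ^ 2) = a ^ 2 * (1 - (1 - b ^ 2 / a ^ 2) * t) / t := by
  field_simp
  ring

lemma one_sub_one_sub_sq_div_sq_mul_pos (a b : ℝ) {t : ℝ} (ht0 : 0 ≤ t) (ht1 : t < 1) :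
    0 < 1 - (1 - b ^ 2 / a ^ 2) * t := by
  have : 0 ≤ b ^ 2 / a ^ 2 * t := by positivity
  nlinarith

lemma demagnetizing_integrand_comp_div_sub {a : ℝ} (ha : 0 < a) (b c : ℝ) {t : ℝ}
    (ht0 : 0 < t) (ht1 : t < 1) :
    a ^ 2 / t ^ 2 * ((a ^ 2 + (a ^ 2 / t - a ^ 2)) * √((a ^ 2 + (a ^ 2 / t - a ^ 2)) *
        (b ^ 2 + (a ^ 2 / t - a ^ 2)) * (c ^ 2 + (a ^ 2 / t - a ^ 2))))⁻¹
      = t ^ (3 / 2 - 1 : ℝ) * (1 - (1 - b ^ 2 / a ^ 2) * t) ^ (-(1 / 2) : ℝ) *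
          (1 - (1 - c ^ 2 / a ^ 2) * t) ^ (-(1 / 2) : ℝ) / a ^ 3 := by
  have hp := one_sub_one_sub_sq_div_sq_mul_pos a b ht0.le ht1
  have hq := one_sub_one_sub_sq_div_sq_mul_pos a c ht0.le ht1
  have ha' : a ^ 2 + (a ^ 2 / t - a ^ 2) = a ^ 2 / t := by ring
  have hb := sq_add_div_sub_sq ha.ne' b ht0.ne'
  have hc := sq_add_div_sub_sq ha.ne' c ht0.ne'
  set p := 1 - (1 - b ^ 2 / a ^ 2) * t
  set q := 1 - (1 - c ^ 2 / a ^ 2) * t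
  have hsqrt : √((a ^ 2 + (a ^ 2 / t - a ^ 2)) * (b ^ 2 + (a ^ 2 / t - a ^ 2)) *
      (c ^ 2 + (a ^ 2 / t - a ^ 2))) = a ^ 3 * √p * √q / (t * √t) := by
    rw [ha', hb, hc, Real.sqrt_eq_iff_eq_sq (by positivity) (by positivity), div_pow, mul_pow,
      mul_pow, mul_pow, Real.sq_sqrt hp.le, Real.sq_sqrt hq.le, Real.sq_sqrt ht0.le]
    field_simp
  rw [hsqrt, ha', show (3 / 2 - 1 : ℝ) = 1 / 2 by norm_num, Real.rpow_neg hp.le,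
    Real.rpow_neg hq.le, ← Real.sqrt_eq_rpow, ← Real.sqrt_eq_rpow, ← Real.sqrt_eq_rpow]
  field_simp

lemma one_sub_sq_div_sq_mem_Ico {a b : ℝ} (hb : 0 < b) (hba : b ≤ a) :
    1 - b ^ 2 / a ^ 2 ∈ Ico 0 1 := by
  have ha : 0 < a := hb.trans_le hba
  refine ⟨sub_nonneg.2 ((div_le_one (by positivity)).2 (by gcongr)), ?_⟩
  have : 0 < b ^ 2 / a ^ 2 := by positivity
  linarith

/-- The demagnetizing integral `L` (divided by `πκ`) of the ellipsoid `a ≥ b ≥ c > 0`: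
`abc·∫₀^∞ du/((a²+u)√((a²+u)(b²+u)(c²+u)))
  = (bc/a²)·(Γ(3/2)Γ(1)/Γ(5/2))·F₁(3/2;1/2,1/2;5/2;1-b²/a²,1-c²/a²)
  = (2bc/(3a²))·F₁(3/2;1/2,1/2;5/2;1-b²/a²,1-c²/a²)`. -/
theorem demagnetizing_factor_L (a b c : ℝ) (hc : 0 < c) (hcb : c ≤ b) (hba : b ≤ a) :
    a * b * c * ∫ u in Set.Ioi (0:ℝ),
        ((a^2+u) * Real.sqrt ((a^2+u)*(b^2+u)*(c^2+u)))⁻¹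
      = (b*c/a^2) * (Real.Gamma (3/2) * Real.Gamma 1 / Real.Gamma (5/2)) *
          appellF1 (3/2) (1/2) (1/2) (5/2) (1 - b^2/a^2) (1 - c^2/a^2) ∧
    a * b * c * ∫ u in Set.Ioi (0:ℝ),
        ((a^2+u) * Real.sqrt ((a^2+u)*(b^2+u)*(c^2+u)))⁻¹
      = (2*b*c/(3*a^2)) *
          appellF1 (3/2) (1/2) (1/2) (5/2) (1 - b^2/a^2) (1 - c^2/a^2) := by
  have hb : 0 < b := hc.trans_le hcb
  have ha : 0 < a := hb.trans_le hba
  obtain ⟨hx0, hx1⟩ := one_sub_sq_div_sq_mem_Ico hb hba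
  obtain ⟨hy0, hy1⟩ := one_sub_sq_div_sq_mem_Ico hc (hcb.trans hba)
  have hGamma : Real.Gamma (3/2) * Real.Gamma 1 / Real.Gamma (5/2) = 2 / 3 := by
    have := (Real.Gamma_pos_of_pos (by norm_num : (0:ℝ) < 3/2)).ne'
    rw [Real.Gamma_one, show (5/2 : ℝ) = 3/2 + 1 by norm_num, Real.Gamma_add_one (by norm_num)]
    field_simp
  have hL : a * b * c * ∫ u in Set.Ioi (0:ℝ),
        ((a^2+u) * Real.sqrt ((a^2+u)*(b^2+u)*(c^2+u)))⁻¹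
      = (2*b*c/(3*a^2)) *
          appellF1 (3/2) (1/2) (1/2) (5/2) (1 - b^2/a^2) (1 - c^2/a^2) := by
    rw [integral_Ioi_eq_integral_Ioo_comp_div_sub (pow_pos ha 2),
      setIntegral_congr_fun measurableSet_Ioo
        fun t ht => demagnetizing_integrand_comp_div_sub ha b c ht.1 ht.2,
      integral_div, integral_rpow_mul_one_sub_rpow_mul_one_sub_rpow (by norm_num) (by norm_num)
        (by norm_num) hx0 hx1 hy0 hy1, show (3/2 : ℝ) + 1 = 5/2 by norm_num]
    field_simp
  exact ⟨by rw [hL, hGamma]; ring, hL⟩
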